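/- arXiv:2009.04969 — 2 statements merged into one kernel-verified Lean document; each statement's English description precedes it below -/
import Mathlib

section
/- Let X be a Banach space and (K_j)_{j∈J} an increasing net (with respect to inclusion) of nonempty weak*-compact subsets of X* such that the weak* closure K of the union ∪_j K_j is norm-bounded (hence weak*-compact). Then (K_j) converges to K in the weak*-Hausdorff hypertopology, i.e., for every A ∈ X, d_H^{(A)}(K_j, K) → 0. -/
open Filter

/-- The Hausdorff pseudometric on weak*-compact subsets of the dual associated with
the seminorm `σ ↦ ‖σ A‖` for `A ∈ X`. -/
noncomputable def dHA {𝕜 X : Type*} [RCLike 𝕜] [NormedAddCommGroup X] [NormedSpace 𝕜 X]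
    (A : X) (K K' : Set (WeakDual 𝕜 X)) : ℝ :=
  max (sSup ((fun σ => sInf ((fun σ' => ‖σ A - σ' A‖) '' K')) '' K)) (sSup ((fun σ' => sInf ((fun σ => ‖σ A - σ' A‖) '' K)) '' K'))

/-- An increasing net of nonempty weak*-compact subsets of the dual of
a Banach space whose union has norm-bounded weak* closure converges, in the
weak*-Hausdorff hypertopology, to that closure. -/
theorem increasing_net_tendsto_closure_union
    {𝕜 X : Type*} [RCLike 𝕜] [NormedAddCommGroup X] [NormedSpace 𝕜 X] [CompleteSpace X]
    {ι : Type*} [SemilatticeSup ι] [Nonempty ι]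
    (K : ι → Set (WeakDual 𝕜 X))
    (hmono : Monotone K)
    (hne : ∀ j, (K j).Nonempty) (hcomp : ∀ j, IsCompact (K j))
    (hbound : ∃ C : ℝ, ∀ σ ∈ closure (⋃ j, K j), ∀ A : X, ‖σ A‖ ≤ C * ‖A‖) :
    ∀ A : X, Tendsto (fun j => dHA A (K j) (closure (⋃ j, K j))) atTop (nhds 0) := by
  obtain ⟨C, hC⟩ := hbound
  intro A
  set Kc := closure (⋃ j, K j) with hKc
  rw [NormedAddCommGroup.tendsto_nhds_zero]
  intro ε hε
  set D : Set 𝕜 := (fun σ : WeakDual 𝕜 X => σ A) '' (⋃ j, K j) with hD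
  have hDb : D ⊆ Metric.closedBall 0 (C * ‖A‖) := by
    rintro _ ⟨σ, hσ, rfl⟩
    simpa [Metric.mem_closedBall, dist_eq_norm] using hC σ (subset_closure hσ) A
  have hDtb : TotallyBounded D :=
    (isCompact_closedBall (0 : 𝕜) _).totallyBounded.subset hDb
  classical
  have hU : {p : 𝕜 × 𝕜 | dist p.1 p.2 < ε / 4} ∈ uniformity 𝕜 :=
    Metric.dist_mem_uniformity (by positivity)
  obtain ⟨t, htD, htfin, htcov⟩ := (totallyBounded_iff_subset.mp hDtb) _ hU
  have hchoice : ∀ y ∈ t, ∃ j, ∃ σ ∈ K j, σ A = y := by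
    intro y hy
    obtain ⟨σ, hσ, rfl⟩ := htD hy
    obtain ⟨j, hj⟩ := Set.mem_iUnion.mp hσ
    exact ⟨j, σ, hj, rfl⟩
  choose! jf σf hmem hval using hchoice
  obtain ⟨j0, hj0⟩ := Finset.exists_le (htfin.toFinset.image jf)
  refine eventually_atTop.mpr ⟨j0, fun j hj => ?_⟩
  have hKj : ∀ y ∈ t, σf y ∈ K j := fun y hy =>
    hmono (le_trans (hj0 _ (Finset.mem_image_of_mem jf (htfin.mem_toFinset.mpr hy))) hj)
      (hmem y hy)
  -- For every σ' in the closure, some element of `K j` is within ε/2 at A.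
  have hclose : ∀ σ' ∈ Kc, ∃ σ ∈ K j, ‖σ A - σ' A‖ ≤ ε / 2 := by
    intro σ' hσ'
    have hcont : Continuous fun σ : WeakDual 𝕜 X => σ A := WeakDual.eval_continuous A
    have h1 : σ' A ∈ closure D :=
      image_closure_subset_closure_image hcont ⟨σ', hσ', rfl⟩
    obtain ⟨w, hwD, hw⟩ := Metric.mem_closure_iff.mp h1 (ε / 4) (by positivity)
    obtain ⟨y, hy, hwy⟩ := Set.mem_iUnion₂.mp (htcov hwD)
    refine ⟨σf y, hKj y hy, ?_⟩
    have hyv : σf y A = y := hval y hy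
    have h2 : dist (σ' A) y < ε / 2 := by
      calc dist (σ' A) y ≤ dist (σ' A) w + dist w y := dist_triangle _ _ _
        _ < ε / 4 + ε / 4 := add_lt_add hw hwy
        _ = ε / 2 := by ring
    rw [hyv, norm_sub_rev, ← dist_eq_norm]
    exact le_of_lt h2
  have hle : dHA A (K j) Kc ≤ ε / 2 := by
    refine max_le (Real.sSup_le ?_ (by positivity)) (Real.sSup_le ?_ (by positivity))
    · rintro _ ⟨σ, hσ, rfl⟩
      have hσc : σ ∈ Kc := subset_closure (Set.mem_iUnion.mpr ⟨j, hσ⟩)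
      refine le_trans (csInf_le ⟨0, by rintro _ ⟨_, _, rfl⟩; exact norm_nonneg _⟩ ⟨σ, hσc, rfl⟩) ?_
      simp; positivity
    · rintro _ ⟨σ', hσ', rfl⟩
      obtain ⟨σ, hσ, hd⟩ := hclose σ' hσ'
      exact le_trans (csInf_le ⟨0, by rintro _ ⟨_, _, rfl⟩; exact norm_nonneg _⟩ ⟨σ, hσ, rfl⟩) hd
  have hnn : 0 ≤ dHA A (K j) Kc :=
    le_max_of_le_right <| by
      apply Real.sSup_nonneg
      rintro _ ⟨σ', _, rfl⟩
      apply Real.sInf_nonneg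
      rintro _ ⟨_, _, rfl⟩
      exact norm_nonneg _
  rw [Real.norm_eq_abs, abs_of_nonneg hnn]
  linarith
end

section
/- Let X be a separable unital C*-algebra with (metrizable) state space E, and let 𝔗 be a *-automorphism of the C*-algebra C(E;X) whose fixed-point algebra contains C(E;ℂ)·1. Then 𝔗 is state-dependent pointwise: defining T^ρ(A) := [𝔗(A)](ρ) for the constant function A ∈ X ⊆ C(E;X), each T^ρ is a *-automorphism of X and [𝔗(f)](ρ) = T^ρ(f(ρ)) for all f ∈ C(E;X) and ρ ∈ E. -/
/-!
If `f x = 0`, then for every `ε > 0` the scalar function `g = (ε / max ε ‖f ·‖) • 1` satisfies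
`g x = 1` and `‖g * f‖ ≤ ε`. Since `𝔗` fixes `g` and *-homomorphisms between C*-algebras are
contractive, `‖𝔗 f x‖ = ‖𝔗 (g * f) x‖ ≤ ‖g * f‖ ≤ ε`. Hence `𝔗 f x = 𝔗 (const (f x)) x`, and this
identity for `𝔗` and `𝔗⁻¹` shows that `a ↦ 𝔗 (const a) x` and `a ↦ 𝔗⁻¹ (const a) x` are mutually
inverse. The sup norm on `C(E, X)` needs `E` compact, which is Banach–Alaoglu: a state has norm
at most `ρ 1 = 1`, by Cauchy–Schwarz for the form `ρ (star a * b)`.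
-/

open scoped ComplexOrder

/-- The state space of a unital C*-algebra `X`. -/
def stateSpace (X : Type*) [NormedRing X] [StarRing X] [NormedAlgebra ℂ X] :
    Set (WeakDual ℂ X) :=
  {ρ | (∀ a : X, 0 ≤ ρ (star a * a)) ∧ ρ 1 = 1}

lemma PositiveLinearMap.norm_apply_le_norm_apply_one_mul {A : Type*} [CStarAlgebra A]
    [PartialOrder A] [StarOrderedRing A] (f : A →ₚ[ℂ] ℂ) (a : A) :
    ‖f a‖ ≤ ‖f 1‖ * ‖a‖ := by
  have hnorm_sq (b : A) : ‖f.toPreGNS b‖ ^ 2 = ‖f (star b * b)‖ := by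
    have := f.preGNS_norm_sq (f.toPreGNS b)
    rw [ofPreGNS_toPreGNS,
      Complex.eq_coe_norm_of_nonneg (f.map_nonneg (star_mul_self_nonneg b))] at this
    exact_mod_cast this
  have h1 : ‖f.toPreGNS 1‖ ^ 2 = ‖f 1‖ := by simpa using hnorm_sq 1
  have cauchySchwarz : ‖f a‖ ≤ ‖f.toPreGNS 1‖ * ‖f.toPreGNS a‖ := by
    simpa [preGNS_inner_def] using norm_inner_le_norm (𝕜 := ℂ) (f.toPreGNS 1) (f.toPreGNS a)
  have hstar : ‖f (star a * a)‖ ≤ ‖f 1‖ * ‖a‖ ^ 2 := by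
    simpa [CStarRing.norm_star_mul_self, sq] using
      f.norm_apply_le_of_nonneg _ (star_mul_self_nonneg a)
  refine (pow_le_pow_iff_left₀ (norm_nonneg _) (by positivity) two_ne_zero).mp ?_
  calc ‖f a‖ ^ 2 ≤ ‖f.toPreGNS 1‖ ^ 2 * ‖f.toPreGNS a‖ ^ 2 := by rw [← mul_pow]; gcongr
    _ ≤ ‖f 1‖ * (‖f 1‖ * ‖a‖ ^ 2) := by rw [h1, hnorm_sq a]; gcongr
    _ = (‖f 1‖ * ‖a‖) ^ 2 := by ring

section States

variable {A : Type*} [CStarAlgebra A]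

lemma norm_apply_le_of_mem_stateSpace {ρ : WeakDual ℂ A} (hρ : ρ ∈ stateSpace A) (a : A) :
    ‖ρ a‖ ≤ ‖a‖ := by
  let := CStarAlgebra.spectralOrder A
  have := CStarAlgebra.spectralOrderedRing A
  let f : A →ₚ[ℂ] ℂ := .mk₀ (ρ : A →ₗ[ℂ] ℂ) fun b hb => by
    obtain ⟨c, rfl⟩ := CStarAlgebra.nonneg_iff_eq_star_mul_self.mp hb
    exact hρ.1 c
  have key : ‖ρ a‖ ≤ ‖ρ 1‖ * ‖a‖ := f.norm_apply_le_norm_apply_one_mul a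
  simpa [hρ.2] using key

lemma isClosed_stateSpace : IsClosed (stateSpace A) := by
  rw [stateSpace, Set.ofPred_and, Set.ofPred_forall]
  exact .inter
    (isClosed_iInter fun a => isClosed_le continuous_const (WeakDual.eval_continuous _))
    (isClosed_eq (WeakDual.eval_continuous 1) continuous_const)

lemma isCompact_stateSpace : IsCompact (stateSpace A) := by
  refine WeakDual.isCompact_of_bounded_of_closed ?_ isClosed_stateSpace
  refine (Metric.isBounded_closedBall (x := (0 : StrongDual ℂ A)) (r := 1)).subset fun ρ hρ => ?_
  rw [Metric.mem_closedBall, dist_zero_right]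
  exact ContinuousLinearMap.opNorm_le_bound _ zero_le_one fun a => by
    rw [one_mul]; exact norm_apply_le_of_mem_stateSpace hρ a

instance : CompactSpace (stateSpace A) := isCompact_iff_compactSpace.mp isCompact_stateSpace

end States

namespace ContinuousMap

variable {E A : Type*} [TopologicalSpace E] [CStarAlgebra A]

def FixesScalarFunctions (S : C(E, A) → C(E, A)) : Prop :=
  ∀ g : C(E, A), (∀ x, ∃ c : ℂ, g x = c • (1 : A)) → S g = g

lemma FixesScalarFunctions.symm {S : C(E, A) ≃⋆ₐ[ℂ] C(E, A)} (hS : FixesScalarFunctions S) :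
    FixesScalarFunctions S.symm :=
  fun g hg => S.symm_apply_eq.mpr (hS g hg).symm

variable [CompactSpace E]

lemma exists_scalar_eq_one_and_norm_mul_le (f : C(E, A)) {x : E} (hx : f x = 0) {ε : ℝ}
    (hε : 0 < ε) :
    ∃ g : C(E, A), (∀ y, ∃ c : ℂ, g y = c • (1 : A)) ∧ g x = 1 ∧ ‖g * f‖ ≤ ε := by
  have hmax (y : E) : 0 < max ε ‖f y‖ := lt_max_of_lt_left hε
  let h : C(E, ℝ) := ⟨fun y => ε / max ε ‖f y‖,
    continuous_const.div (continuous_const.max f.continuous.norm) fun y => (hmax y).ne'⟩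
  refine ⟨⟨fun y => (h y : ℂ) • (1 : A), by fun_prop⟩, fun y => ⟨h y, rfl⟩, ?_, ?_⟩
  · simp [h, hx, hε.le, hε.ne']
  refine (norm_le _ hε.le).mpr fun y => ?_
  have hy : ε / max ε ‖f y‖ * ‖f y‖ ≤ ε := by
    rw [div_mul_eq_mul_div, div_le_iff₀ (hmax y)]
    exact mul_le_mul_of_nonneg_left (le_max_right _ _) hε.le
  simpa [h, norm_smul, abs_of_pos hε, abs_of_pos (hmax y)] using hy

section

variable {F : Type*} [FunLike F C(E, A) C(E, A)] [NonUnitalAlgHomClass F ℂ C(E, A) C(E, A)]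
  [StarHomClass F C(E, A) C(E, A)] {S : F}

lemma apply_eq_zero_of_fixesScalarFunctions (hS : FixesScalarFunctions S) {f : C(E, A)} {x : E}
    (hx : f x = 0) : S f x = 0 := by
  refine norm_le_zero_iff.mp (le_of_forall_pos_le_add fun ε hε => ?_)
  obtain ⟨g, hg_scalar, hgx, hgf⟩ := exists_scalar_eq_one_and_norm_mul_le f hx hε
  have hlocal : S f x = S (g * f) x := by
    rw [map_mul, hS g hg_scalar, mul_apply, hgx, one_mul]
  calc ‖S f x‖ = ‖S (g * f) x‖ := by rw [hlocal]
    _ ≤ ‖S (g * f)‖ := norm_coe_le_norm _ _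
    _ ≤ ‖g * f‖ := NonUnitalStarAlgHom.norm_apply_le S _
    _ ≤ 0 + ε := by rwa [zero_add]

lemma apply_eq_apply_const_of_fixesScalarFunctions (hS : FixesScalarFunctions S)
    (f : C(E, A)) (x : E) : S f x = S (const E (f x)) x := by
  have := apply_eq_zero_of_fixesScalarFunctions hS (f := f - const E (f x)) (x := x) (by simp)
  rwa [map_sub, sub_apply, sub_eq_zero] at this

end

def pointwiseStarAlgEquiv (S : C(E, A) ≃⋆ₐ[ℂ] C(E, A)) (hS : FixesScalarFunctions S) (x : E) :
    A ≃⋆ₐ[ℂ] A where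
  toFun a := S (const E a) x
  invFun a := S.symm (const E a) x
  left_inv a := by
    change S.symm (const E (S (const E a) x)) x = a
    rw [← apply_eq_apply_const_of_fixesScalarFunctions hS.symm, S.symm_apply_apply, const_apply]
  right_inv a := by
    change S (const E (S.symm (const E a) x)) x = a
    rw [← apply_eq_apply_const_of_fixesScalarFunctions hS, S.apply_symm_apply, const_apply]
  map_mul' a b := congr($(map_mul S (const E a) (const E b)) x)
  map_add' a b := congr($(map_add S (const E a) (const E b)) x)
  map_star' a := congr($(map_star S (const E a)) x)
  map_smul' c a := congr($(map_smul S c (const E a)) x)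

end ContinuousMap

open ContinuousMap in
theorem stateDependent_pointwise_of_fixing_classical_algebra_general
    (X : Type*) [NormedRing X] [StarRing X] [CStarRing X]
    [NormedAlgebra ℂ X] [StarModule ℂ X] [CompleteSpace X]
    (𝔗 : C(↥(stateSpace X), X) ≃⋆ₐ[ℂ] C(↥(stateSpace X), X))
    (hfix : ∀ g : C(↥(stateSpace X), X),
      (∀ ρ : ↥(stateSpace X), ∃ c : ℂ, g ρ = c • (1 : X)) → 𝔗 g = g) :
    ∃ T : ↥(stateSpace X) → X ≃⋆ₐ[ℂ] X,
      (∀ (ρ : ↥(stateSpace X)) (a : X), T ρ a = 𝔗 (ContinuousMap.const _ a) ρ) ∧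
      (∀ (f : C(↥(stateSpace X), X)) (ρ : ↥(stateSpace X)), 𝔗 f ρ = T ρ (f ρ)) := by
  let : CStarAlgebra X := { ‹NormedRing X›, ‹StarRing X›, ‹CStarRing X›, ‹NormedAlgebra ℂ X›,
    ‹StarModule ℂ X›, ‹CompleteSpace X› with }
  exact ⟨pointwiseStarAlgEquiv 𝔗 hfix, fun _ _ => rfl,
    apply_eq_apply_const_of_fixesScalarFunctions hfix⟩

/-- Let `X` be a separable unital C*-algebra with state space `E` and
`𝔗` a *-automorphism of `C(E; X)` whose fixed-point algebra contains the classical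
subalgebra `C(E; ℂ) · 1`.  Then `𝔗` is state-dependent pointwise: setting
`T^ρ (a) := [𝔗(a)](ρ)` on constant functions, each `T^ρ` is a *-automorphism of `X`
and `[𝔗(f)](ρ) = T^ρ (f ρ)` for all `f ∈ C(E; X)` and `ρ ∈ E`. -/
theorem stateDependent_pointwise_of_fixing_classical_algebra
    (X : Type*) [NormedRing X] [StarRing X] [CStarRing X]
    [NormedAlgebra ℂ X] [StarModule ℂ X] [CompleteSpace X]
    [TopologicalSpace.SeparableSpace X]
    (𝔗 : C(↥(stateSpace X), X) ≃⋆ₐ[ℂ] C(↥(stateSpace X), X))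
    (hfix : ∀ g : C(↥(stateSpace X), X),
      (∀ ρ : ↥(stateSpace X), ∃ c : ℂ, g ρ = c • (1 : X)) → 𝔗 g = g) :
    ∃ T : ↥(stateSpace X) → X ≃⋆ₐ[ℂ] X,
      (∀ (ρ : ↥(stateSpace X)) (a : X), T ρ a = 𝔗 (ContinuousMap.const _ a) ρ) ∧
      (∀ (f : C(↥(stateSpace X), X)) (ρ : ↥(stateSpace X)), 𝔗 f ρ = T ρ (f ρ)) :=
  stateDependent_pointwise_of_fixing_classical_algebra_general X 𝔗 hfix
end
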